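/- arXiv:2406.16343 — 2 statements merged into one kernel-verified Lean document; each statement's English description precedes it below -/
import Mathlib

section
/- For any delegation instance (with possibly randomized outside option), f(A*) = Σ_{i ∈ A* ∪ {0}} E[v_i · 1[g(A*,v) = i]] ≤ Σ_{i ∈ A* ∪ {0}} f(A_{b_i}); consequently there exists a threshold t with f(A_t) ≥ f(A*)/(|A*| + 1), so the best threshold set is an (n+1)-approximation to the optimal delegation set. -/
open Finset

/-!
Delegated choice with an outside option.  There are `n` actions `1, …, n`
(the nonzero elements of `Fin (n+1)`) plus the outside option, action `0`.
Action `i` has a known bias `b i`; the value profile `v : Fin (n+1) → ℝ` is drawn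
from a finitely supported distribution with support `S` and probability mass `p`.
-/

/-- Value profiles for `n` actions plus the outside option (index `0`). -/
abbrev Profile (n : ℕ) := Fin (n + 1) → ℝ

/-- `g` is a valid agent choice function for biases `b`: from the menu `A ∪ {0}` it
picks an agent-utility-maximizing action (utility of `i` is `v i + b i`),
breaking ties in favor of larger value. -/
def IsChoice (n : ℕ) (b : Fin (n + 1) → ℝ)
    (g : Finset (Fin (n + 1)) → Profile n → Fin (n + 1)) : Prop :=
  ∀ (A : Finset (Fin (n + 1))) (v : Profile n),
    g A v ∈ insert 0 A ∧
    (∀ j ∈ insert 0 A, v j + b j ≤ v (g A v) + b (g A v)) ∧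
    (∀ j ∈ insert 0 A, v j + b j = v (g A v) + b (g A v) → v j ≤ v (g A v))

/-- The principal's expected utility `f(A)` from menu `A`. -/
def util {n : ℕ} (S : Finset (Profile n)) (p : Profile n → ℝ)
    (g : Finset (Fin (n + 1)) → Profile n → Fin (n + 1))
    (A : Finset (Fin (n + 1))) : ℝ :=
  ∑ v ∈ S, p v * v (g A v)

/-- The threshold menu `A_t = {i ∈ Ω : b i ≤ t}`. -/
noncomputable def thresh (n : ℕ) (b : Fin (n + 1) → ℝ) (t : ℝ) : Finset (Fin (n + 1)) :=
  Finset.univ.filter fun i => i ≠ 0 ∧ b i ≤ t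

/-- `S, p` is a finitely supported probability distribution over nonnegative value
profiles. -/
def ValidDist {n : ℕ} (S : Finset (Profile n)) (p : Profile n → ℝ) : Prop :=
  (∀ v ∈ S, 0 ≤ p v) ∧ (∑ v ∈ S, p v = 1) ∧ ∀ v ∈ S, ∀ i, 0 ≤ v i

/-- The coordinates `v 0, v 1, …, v n` are mutually independent: the joint mass of
every profile is the product of the marginal masses of its coordinates. -/
def IndepValues {n : ℕ} (S : Finset (Profile n)) (p : Profile n → ℝ) : Prop :=
  ∀ w : Profile n,
    (∑ v ∈ S.filter fun v => v = w, p v)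
      = ∏ i : Fin (n + 1), ∑ v ∈ S.filter fun v => v i = w i, p v

/-- `Astar` is an optimal menu: a subset of `Ω` (not containing the outside
option `0`) maximizing the principal's expected utility. -/
def OptimalMenu {n : ℕ} (S : Finset (Profile n)) (p : Profile n → ℝ)
    (g : Finset (Fin (n + 1)) → Profile n → Fin (n + 1))
    (Astar : Finset (Fin (n + 1))) : Prop :=
  (0 : Fin (n + 1)) ∉ Astar ∧
    ∀ A : Finset (Fin (n + 1)), (0 : Fin (n + 1)) ∉ A →
      util S p g A ≤ util S p g Astar

/-!
Split `f(A)` according to the action `i ∈ A ∪ {0}` the agent picks. Whenever the agent picks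
`i` from `A ∪ {0}`, it picks from `A_{b i} ∪ {0}` an action worth at least `v i` to the
principal: either an action `j ≠ 0` with `b j ≤ b i` and `v j + b j ≥ v i + b i`, or the
outside option, which then ties with `i` and wins the tie only if `v 0 ≥ v i`. Hence each
summand is at most `f(A_{b i})`, and the largest of these `|A| + 1` values is at least their
average.
-/

theorem mem_insert_zero_thresh_self (n : ℕ) (b : Fin (n + 1) → ℝ) (i : Fin (n + 1)) :
    i ∈ insert 0 (thresh n b (b i)) := by
  by_cases hi : i = 0
  · simp [hi]
  · simp [thresh, hi]

theorem util_nonneg {n : ℕ} {S : Finset (Profile n)} {p : Profile n → ℝ}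
    (hdist : ValidDist S p) (g : Finset (Fin (n + 1)) → Profile n → Fin (n + 1))
    (A : Finset (Fin (n + 1))) : 0 ≤ util S p g A :=
  sum_nonneg fun v hvS => mul_nonneg (hdist.1 v hvS) (hdist.2.2 v hvS _)

namespace IsChoice

variable {n : ℕ} {b : Fin (n + 1) → ℝ} {g : Finset (Fin (n + 1)) → Profile n → Fin (n + 1)}

theorem value_le_value_thresh (hg : IsChoice n b g) {A : Finset (Fin (n + 1))}
    {v : Profile n} {i : Fin (n + 1)} (hi : g A v = i) :
    v i ≤ v (g (thresh n b (b i)) v) := by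
  obtain ⟨hmem, hmax, htie⟩ := hg (thresh n b (b i)) v
  have hself := mem_insert_zero_thresh_self n b i
  have hpref := hmax i hself
  rcases mem_insert.mp hmem with hzero | hthresh
  · have hzero_le : v 0 + b 0 ≤ v i + b i := hi ▸ (hg A v).2.1 0 (mem_insert_self 0 A)
    rw [hzero] at hpref htie ⊢
    exact htie i hself (by linarith)
  · have hbias : b (g (thresh n b (b i)) v) ≤ b i := (mem_filter.mp hthresh).2.2
    linarith

theorem util_eq_sum_fiberwise (hg : IsChoice n b g) (S : Finset (Profile n))
    (p : Profile n → ℝ) (A : Finset (Fin (n + 1))) :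
    util S p g A = ∑ i ∈ insert 0 A, ∑ v ∈ S.filter fun v => g A v = i, p v * v i := by
  rw [util, ← sum_fiberwise_of_maps_to (fun v _ => (hg A v).1)]
  refine sum_congr rfl fun i _ => sum_congr rfl fun v hv => ?_
  rw [(mem_filter.mp hv).2]

theorem sum_fiber_le_util_thresh (hg : IsChoice n b g) {S : Finset (Profile n)}
    {p : Profile n → ℝ} (hdist : ValidDist S p) (A : Finset (Fin (n + 1))) (i : Fin (n + 1)) :
    ∑ v ∈ S.filter fun v => g A v = i, p v * v i ≤ util S p g (thresh n b (b i)) := by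
  obtain ⟨hp, -, hv⟩ := hdist
  calc ∑ v ∈ S.filter fun v => g A v = i, p v * v i
      ≤ ∑ v ∈ S.filter fun v => g A v = i, p v * v (g (thresh n b (b i)) v) := by
        refine sum_le_sum fun v hvi => ?_
        obtain ⟨hvS, hgv⟩ := mem_filter.mp hvi
        exact mul_le_mul_of_nonneg_left (hg.value_le_value_thresh hgv) (hp v hvS)
    _ ≤ util S p g (thresh n b (b i)) :=
        sum_le_sum_of_subset_of_nonneg (filter_subset _ _)
          fun v hvS _ => mul_nonneg (hp v hvS) (hv v hvS _)

theorem util_le_sum_util_thresh (hg : IsChoice n b g) {S : Finset (Profile n)}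
    {p : Profile n → ℝ} (hdist : ValidDist S p) (A : Finset (Fin (n + 1))) :
    util S p g A ≤ ∑ i ∈ insert 0 A, util S p g (thresh n b (b i)) := by
  rw [hg.util_eq_sum_fiberwise]
  exact sum_le_sum fun i _ => hg.sum_fiber_le_util_thresh hdist A i

theorem exists_util_le_card_succ_mul_util_thresh (hg : IsChoice n b g)
    {S : Finset (Profile n)} {p : Profile n → ℝ} (hdist : ValidDist S p)
    (A : Finset (Fin (n + 1))) :
    ∃ t : ℝ, util S p g A ≤ ((A.card : ℝ) + 1) * util S p g (thresh n b t) := by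
  obtain ⟨i, -, hi⟩ := exists_max_image (insert 0 A)
    (fun i => util S p g (thresh n b (b i))) (insert_nonempty 0 A)
  refine ⟨b i, ?_⟩
  have hcard : ((insert 0 A).card : ℝ) ≤ A.card + 1 := by exact_mod_cast card_insert_le 0 A
  calc util S p g A
      ≤ ∑ j ∈ insert 0 A, util S p g (thresh n b (b j)) := hg.util_le_sum_util_thresh hdist A
    _ ≤ (insert 0 A).card • util S p g (thresh n b (b i)) := sum_le_card_nsmul _ _ _ hi
    _ ≤ ((A.card : ℝ) + 1) * util S p g (thresh n b (b i)) := by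
        rw [nsmul_eq_mul]
        exact mul_le_mul_of_nonneg_right hcard (util_nonneg hdist g _)

end IsChoice

theorem threshold_n_plus_one_approximation_general {n : ℕ} (b : Fin (n + 1) → ℝ)
    (S : Finset (Profile n)) (p : Profile n → ℝ) (hdist : ValidDist S p)
    (g : Finset (Fin (n + 1)) → Profile n → Fin (n + 1)) (hg : IsChoice n b g)
    (Astar : Finset (Fin (n + 1))) :
    (util S p g Astar =
        ∑ i ∈ insert 0 Astar, ∑ v ∈ S.filter fun v => g Astar v = i, p v * v i) ∧
    (util S p g Astar ≤ ∑ i ∈ insert 0 Astar, util S p g (thresh n b (b i))) ∧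
    ∃ t : ℝ, util S p g Astar ≤ ((Astar.card : ℝ) + 1) * util S p g (thresh n b t) :=
  ⟨hg.util_eq_sum_fiberwise S p Astar, hg.util_le_sum_util_thresh hdist Astar,
    hg.exists_util_le_card_succ_mul_util_thresh hdist Astar⟩

/-- `f(A*)` is the sum over `i ∈ A* ∪ {0}` of the contributions
`E[v i · 1[g(A*,v) = i]]`, each of which is at most `f(A_{b i})`; consequently
some threshold menu obtains at least `f(A*)/(|A*| + 1)`, so the best threshold
is an `(n+1)`-approximation.  This holds for arbitrary (possibly randomized)
outside options. -/
theorem threshold_n_plus_one_approximation {n : ℕ} (b : Fin (n + 1) → ℝ)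
    (S : Finset (Profile n)) (p : Profile n → ℝ) (hdist : ValidDist S p)
    (g : Finset (Fin (n + 1)) → Profile n → Fin (n + 1)) (hg : IsChoice n b g)
    (Astar : Finset (Fin (n + 1))) (hopt : OptimalMenu S p g Astar) :
    (util S p g Astar =
        ∑ i ∈ insert 0 Astar, ∑ v ∈ S.filter fun v => g Astar v = i, p v * v i) ∧
    (util S p g Astar ≤ ∑ i ∈ insert 0 Astar, util S p g (thresh n b (b i))) ∧
    ∃ t : ℝ, util S p g Astar ≤ ((Astar.card : ℝ) + 1) * util S p g (thresh n b t) :=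
  threshold_n_plus_one_approximation_general b S p hdist g hg Astar
end

section
/- Suppose the value profile v is drawn from a discrete distribution with finitely many realizations, each occurring with probability at least p_min, where 0 < p_min ≤ 1/2 (values may be arbitrarily correlated; no outside option). Then there exists a threshold t ∈ ℝ such that 4·log₂(1/p_min) · f(A_t) ≥ f(A*); i.e., the best threshold policy is a 4·log(p_min^{−1})-approximation to the optimal delegation set. -/
open Finset

/-!
Delegated choice with **no outside option**.  There are `n` actions, indexed by
`Fin n`.  Action `i` has a known bias `b i`; the value profile `v : Fin n → ℝ`
is drawn from a finitely supported distribution with support `S` and probability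
mass `p`.  From a nonempty menu `A` the agent picks an action maximizing
`v i + b i`, breaking ties in favor of larger value `v i`.
-/

/-- `g` is a valid agent choice function for biases `b` (no outside option):
from every nonempty menu `A` it picks an agent-utility-maximizing action,
breaking ties in favor of larger value. -/
def IsChoiceN (n : ℕ) (b : Fin n → ℝ)
    (g : Finset (Fin n) → (Fin n → ℝ) → Fin n) : Prop :=
  ∀ (A : Finset (Fin n)) (v : Fin n → ℝ), A.Nonempty →
    g A v ∈ A ∧
    (∀ j ∈ A, v j + b j ≤ v (g A v) + b (g A v)) ∧
    (∀ j ∈ A, v j + b j = v (g A v) + b (g A v) → v j ≤ v (g A v))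

/-- The principal's expected utility `f(A)` from menu `A`. -/
def utilN {n : ℕ} (S : Finset (Fin n → ℝ)) (p : (Fin n → ℝ) → ℝ)
    (g : Finset (Fin n) → (Fin n → ℝ) → Fin n) (A : Finset (Fin n)) : ℝ :=
  ∑ v ∈ S, p v * v (g A v)

/-- The threshold menu `A_t = {i : b i ≤ t}`. -/
noncomputable def threshN (n : ℕ) (b : Fin n → ℝ) (t : ℝ) : Finset (Fin n) :=
  Finset.univ.filter fun i => b i ≤ t

/-- `S, p` is a finitely supported probability distribution over nonnegative value
profiles. -/
def ValidDistN {n : ℕ} (S : Finset (Fin n → ℝ)) (p : (Fin n → ℝ) → ℝ) : Prop :=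
  (∀ v ∈ S, 0 ≤ p v) ∧ (∑ v ∈ S, p v = 1) ∧ ∀ v ∈ S, ∀ i, 0 ≤ v i

/-- The coordinates `v 1, …, v n` are mutually independent: the joint mass of
every profile is the product of the marginal masses of its coordinates. -/
def IndepValuesN {n : ℕ} (S : Finset (Fin n → ℝ)) (p : (Fin n → ℝ) → ℝ) : Prop :=
  ∀ w : Fin n → ℝ,
    (∑ v ∈ S.filter fun v => v = w, p v)
      = ∏ i : Fin n, ∑ v ∈ S.filter fun v => v i = w i, p v

/-!
Let `B` be the largest bias in a menu `A` and `β(v)` the bias of the action the agent takes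
from `A` at profile `v`; write `T` for the best value of a threshold menu `A_t` with `t` a bias
in `A`. Since `v ≥ 0`, the agent's utility at `A` is at least `B`, and at any `A_t` with
`t ≥ β(v)` the principal still gets at least that utility minus `t`. Hence
`f(A) = E[utility - B] + E[B - β]`, where the first term is at most `f(A_B) ≤ T` and the
tail of the second satisfies
`(B - β(v)) · P(β ≤ β(v)) ≤ f(A_{β(v)}) ≤ T`. A distribution with atoms of mass at least
`p_min` whose tails obey such a bound has mean at most `T (1 + ln (1 / p_min))`, so
`f(A) ≤ (2 + ln (1 / p_min)) T ≤ 4 log₂ (1 / p_min) T`.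
-/

/-- Removing the atom `a` of least `d` costs `p a · d a ≤ T · p a / Q ≤ T · log (Q / Q')`,
where `Q` and `Q'` are the total masses before and after. -/
theorem sum_mul_le_one_add_log_sum_div_mul {ι : Type*} (s : Finset ι) (p d : ι → ℝ)
    {pmin T : ℝ} (hpmin : 0 < pmin) (hT : 0 ≤ T) (hp : ∀ v ∈ s, pmin ≤ p v) (hd : ∀ v ∈ s, 0 ≤ d v)
    (htail : ∀ v ∈ s, d v * ∑ w ∈ s with d v ≤ d w, p w ≤ T) :
    ∑ v ∈ s, p v * d v ≤ (1 + Real.log ((∑ v ∈ s, p v) / pmin)) * T := by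
  classical
  induction s using Finset.induction_on_min_value d with
  | empty => simpa using hT
  | insert a s ha hmin ih =>
    have hpa : pmin ≤ p a := hp a (mem_insert_self a s)
    have hda : d a * (p a + ∑ v ∈ s, p v) ≤ T := by
      have hall : ∀ w ∈ insert a s, d a ≤ d w := by
        simpa only [mem_insert, forall_eq_or_imp, le_refl, true_and] using hmin
      simpa only [filter_true_of_mem hall, sum_insert ha] using htail a (mem_insert_self a s)
    rw [sum_insert ha, sum_insert ha]
    rcases s.eq_empty_or_nonempty with rfl | ⟨v₀, hv₀⟩
    · have hlog : 0 ≤ Real.log (p a / pmin) := Real.log_nonneg ((one_le_div hpmin).2 hpa)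
      simp only [sum_empty, add_zero] at hda ⊢
      linarith [mul_nonneg hlog hT]
    · have hps : ∀ v ∈ s, pmin ≤ p v := fun v hv => hp v (mem_insert_of_mem hv)
      have ih := ih hps (fun v hv => hd v (mem_insert_of_mem hv)) fun v hv =>
        (mul_le_mul_of_nonneg_left
          (sum_le_sum_of_subset_of_nonneg (filter_subset_filter _ (subset_insert a s))
            fun w hw _ => hpmin.le.trans (hp w (mem_filter.1 hw).1))
          (hd v (mem_insert_of_mem hv))).trans (htail v (mem_insert_of_mem hv))
      set Q' := ∑ v ∈ s, p v
      have hQ' : 0 < Q' :=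
        sum_pos' (fun v hv => hpmin.le.trans (hps v hv)) ⟨v₀, hv₀, hpmin.trans_le (hps v₀ hv₀)⟩
      have hQ : 0 < p a + Q' := by linarith
      have hratio : p a / (p a + Q') ≤ Real.log ((p a + Q') / Q') := by
        have := Real.one_sub_inv_le_log_of_pos (div_pos hQ hQ')
        rwa [inv_div, one_sub_div hQ.ne', add_sub_cancel_right] at this
      have hlogs : Real.log ((p a + Q') / Q')
          = Real.log ((p a + Q') / pmin) - Real.log (Q' / pmin) := by
        rw [Real.log_div hQ.ne' hQ'.ne', Real.log_div hQ.ne' hpmin.ne',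
          Real.log_div hQ'.ne' hpmin.ne']
        ring
      have hterm : p a * d a ≤ T * (p a / (p a + Q')) := by
        rw [mul_div_assoc', le_div_iff₀ hQ]
        linarith [mul_le_mul_of_nonneg_left hda (hpmin.le.trans hpa)]
      rw [hlogs] at hratio
      linarith [mul_le_mul_of_nonneg_left hratio hT]

theorem sum_mul_le_one_add_log_one_div_mul {ι : Type*} (s : Finset ι) (p d : ι → ℝ)
    {pmin T : ℝ} (hpmin : 0 < pmin) (hT : 0 ≤ T) (hp : ∀ v ∈ s, 0 ≤ p v)
    (hsum : ∑ v ∈ s, p v = 1) (hmass : ∀ v ∈ s, p v ≠ 0 → pmin ≤ p v) (hd : ∀ v ∈ s, 0 ≤ d v)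
    (htail : ∀ v ∈ s, d v * ∑ w ∈ s with d v ≤ d w, p w ≤ T) :
    ∑ v ∈ s, p v * d v ≤ (1 + Real.log (1 / pmin)) * T := by
  classical
  have hsupp : ∑ v ∈ s with p v ≠ 0, p v = 1 := (sum_filter_ne_zero s).trans hsum
  have := sum_mul_le_one_add_log_sum_div_mul (s.filter fun v => p v ≠ 0) p d hpmin hT
    (fun v hv => hmass v (mem_filter.1 hv).1 (mem_filter.1 hv).2)
    (fun v hv => hd v (mem_filter.1 hv).1) fun v hv =>
      (mul_le_mul_of_nonneg_left
        (sum_le_sum_of_subset_of_nonneg (filter_subset_filter _ (filter_subset _ s))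
          fun w hw _ => hp w (mem_filter.1 hw).1)
        (hd v (mem_filter.1 hv).1)).trans (htail v (mem_filter.1 hv).1)
  rwa [hsupp, sum_filter_of_ne fun v _ h => left_ne_zero_of_mul h] at this

section Delegation

variable {n : ℕ} {b : Fin n → ℝ} {g : Finset (Fin n) → (Fin n → ℝ) → Fin n}
  {S : Finset (Fin n → ℝ)} {p : (Fin n → ℝ) → ℝ}

theorem mem_threshN {t : ℝ} {i : Fin n} : i ∈ threshN n b t ↔ b i ≤ t := by
  simp [threshN]

theorem utilN_nonneg (hdist : ValidDistN S p) (A : Finset (Fin n)) : 0 ≤ utilN S p g A :=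
  sum_nonneg fun v hv => mul_nonneg (hdist.1 v hv) (hdist.2.2 v hv _)

theorem IsChoiceN.sub_le_threshN (hg : IsChoiceN n b g) (v : Fin n → ℝ) {t : ℝ} {j : Fin n}
    (hj : b j ≤ t) : v j + b j - t ≤ v (g (threshN n b t) v) := by
  obtain ⟨hmem, hbest, -⟩ := hg (threshN n b t) v ⟨j, mem_threshN.2 hj⟩
  linarith [hbest j (mem_threshN.2 hj), mem_threshN.1 hmem]

theorem IsChoiceN.sum_filter_le_utilN_threshN (hg : IsChoiceN n b g)
    (hp : ∀ v ∈ S, 0 ≤ p v) (hval : ∀ v ∈ S, ∀ i, 0 ≤ v i) (σ : (Fin n → ℝ) → Fin n) (t : ℝ) :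
    ∑ v ∈ S with b (σ v) ≤ t, p v * (v (σ v) + b (σ v) - t) ≤ utilN S p g (threshN n b t) :=
  calc ∑ v ∈ S with b (σ v) ≤ t, p v * (v (σ v) + b (σ v) - t)
      ≤ ∑ v ∈ S with b (σ v) ≤ t, p v * v (g (threshN n b t) v) :=
        sum_le_sum fun v hv => mul_le_mul_of_nonneg_left
          (hg.sub_le_threshN v (mem_filter.1 hv).2) (hp v (mem_filter.1 hv).1)
    _ ≤ utilN S p g (threshN n b t) :=
        sum_le_sum_of_subset_of_nonneg (filter_subset _ S)
          fun v hv _ => mul_nonneg (hp v hv) (hval v hv _)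

theorem IsChoiceN.utilN_le_two_add_log_mul (hg : IsChoiceN n b g) (hdist : ValidDistN S p)
    {pmin : ℝ} (hpmin : 0 < pmin) (hmass : ∀ v ∈ S, p v ≠ 0 → pmin ≤ p v)
    {A : Finset (Fin n)} (hA : A.Nonempty) {T : ℝ}
    (hT : ∀ j ∈ A, utilN S p g (threshN n b (b j)) ≤ T) :
    utilN S p g A ≤ (2 + Real.log (1 / pmin)) * T := by
  classical
  obtain ⟨hp, hsum, hval⟩ := hdist
  obtain ⟨j₀, hj₀, hmax⟩ := A.exists_max_image b hA
  set B := b j₀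
  have hchoice : ∀ v, g A v ∈ A := fun v => (hg A v hA).1
  have hutil : ∀ v ∈ S, B ≤ v (g A v) + b (g A v) := fun v hv => by
    linarith [(hg A v hA).2.1 j₀ hj₀, hval v hv j₀]
  have hupper : ∑ v ∈ S, p v * (v (g A v) + b (g A v) - B) ≤ T := by
    have := hg.sum_filter_le_utilN_threshN hp hval (g A) B
    rw [filter_true_of_mem fun v _ => hmax _ (hchoice v)] at this
    exact this.trans (hT j₀ hj₀)
  have htail : ∀ v ∈ S,
      (B - b (g A v)) * ∑ w ∈ S with B - b (g A v) ≤ B - b (g A w), p w ≤ T := by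
    intro v _
    simp only [sub_le_sub_iff_left, mul_sum]
    refine le_trans (sum_le_sum fun w hw => ?_)
      ((hg.sum_filter_le_utilN_threshN hp hval (g A) _).trans (hT _ (hchoice v)))
    rw [mul_comm]
    exact mul_le_mul_of_nonneg_left (by linarith [hutil w (mem_filter.1 hw).1])
      (hp w (mem_filter.1 hw).1)
  have hlower := sum_mul_le_one_add_log_one_div_mul S p (fun v => B - b (g A v)) hpmin
    ((utilN_nonneg ⟨hp, hsum, hval⟩ _).trans (hT j₀ hj₀)) hp hsum hmass
    (fun v _ => sub_nonneg.2 (hmax _ (hchoice v))) htail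
  calc utilN S p g A
      = ∑ v ∈ S, p v * (v (g A v) + b (g A v) - B) + ∑ v ∈ S, p v * (B - b (g A v)) := by
        rw [utilN, ← sum_add_distrib]
        exact sum_congr rfl fun v _ => by ring
    _ ≤ T + (1 + Real.log (1 / pmin)) * T := add_le_add hupper hlower
    _ = (2 + Real.log (1 / pmin)) * T := by ring

end Delegation

theorem two_add_log_le_four_mul_logb {x : ℝ} (hx : 2 ≤ x) :
    2 + Real.log x ≤ 4 * Real.logb 2 x := by
  have hlog2 : Real.log 2 ≤ Real.log x := Real.log_le_log two_pos hx
  have hlog2_pos : 0 < Real.log 2 := Real.log_pos one_lt_two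
  rw [Real.logb, mul_div_assoc', le_div_iff₀ hlog2_pos]
  nlinarith [Real.log_two_gt_d9, Real.log_two_lt_d9]

theorem correlated_threshold_approximation_general {n : ℕ} (b : Fin n → ℝ)
    (S : Finset (Fin n → ℝ)) (p : (Fin n → ℝ) → ℝ) (hdist : ValidDistN S p)
    (pmin : ℝ) (hpmin : 0 < pmin) (hpmin2 : pmin ≤ 1 / 2)
    (hmass : ∀ v ∈ S, p v ≠ 0 → pmin ≤ p v)
    (g : Finset (Fin n) → (Fin n → ℝ) → Fin n) (hg : IsChoiceN n b g)
    (Astar : Finset (Fin n)) (hA : Astar.Nonempty) :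
    ∃ t : ℝ, (threshN n b t).Nonempty ∧
      utilN S p g Astar ≤ 4 * Real.logb 2 (1 / pmin) * utilN S p g (threshN n b t) := by
  obtain ⟨t, ht, hbest⟩ :=
    (Astar.image b).exists_max_image (fun t => utilN S p g (threshN n b t)) (hA.image b)
  obtain ⟨j, -, rfl⟩ := mem_image.1 ht
  refine ⟨b j, ⟨j, mem_threshN.2 le_rfl⟩, ?_⟩
  have hpmin_inv : 2 ≤ 1 / pmin := by rw [le_div_iff₀ hpmin]; linarith
  calc utilN S p g Astar ≤ (2 + Real.log (1 / pmin)) * utilN S p g (threshN n b (b j)) :=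
        hg.utilN_le_two_add_log_mul hdist hpmin hmass hA
          fun i hi => hbest _ (mem_image_of_mem b hi)
    _ ≤ 4 * Real.logb 2 (1 / pmin) * utilN S p g (threshN n b (b j)) :=
        mul_le_mul_of_nonneg_right (two_add_log_le_four_mul_logb hpmin_inv) (utilN_nonneg hdist _)

/-- **correlated values.** If every realized value profile has
probability at least `p_min` with `0 < p_min ≤ 1/2`, then some threshold menu is a
`4·log₂(1/p_min)`-approximation to the optimal menu. -/
theorem correlated_threshold_approximation {n : ℕ} (b : Fin n → ℝ)
    (S : Finset (Fin n → ℝ)) (p : (Fin n → ℝ) → ℝ) (hdist : ValidDistN S p)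
    (pmin : ℝ) (hpmin : 0 < pmin) (hpmin2 : pmin ≤ 1 / 2)
    (hmass : ∀ v ∈ S, p v ≠ 0 → pmin ≤ p v)
    (g : Finset (Fin n) → (Fin n → ℝ) → Fin n) (hg : IsChoiceN n b g)
    (Astar : Finset (Fin n)) (hA : Astar.Nonempty)
    (hopt : ∀ A : Finset (Fin n), A.Nonempty → utilN S p g A ≤ utilN S p g Astar) :
    ∃ t : ℝ, (threshN n b t).Nonempty ∧
      utilN S p g Astar ≤ 4 * Real.logb 2 (1 / pmin) * utilN S p g (threshN n b t) :=
  correlated_threshold_approximation_general b S p hdist pmin hpmin hpmin2 hmass g hg Astar hA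
end
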